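/- Pathwise comparison: let $(U_n),(V_n)$ be two independent i.i.d. uniform sequences, $x\le x'$ in $[0,1]$, $p_A\le p_A'$, and define the coupled algorithms $X_{n+1}=X_n+\gamma_{n+1}\big((1-X_n)\mathbf{1}_{\{U_{n+1}\le X_n,\,V_{n+1}\le p_A\}} - X_n\mathbf{1}_{\{U_{n+1}>X_n,\,V_{n+1}\le p_B\}}\big)$ from $X_0=x$, and $X_n'$ analogously with parameters $(p_B,p_A')$ from $X_0'=x'$. Then $X_n\le X_n'$ for every $n$, pathwise. -/

import Mathlib

open MeasureTheory ProbabilityTheory Filter Set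

/-- The two-armed bandit update: the draw `u` selects arm A when `u ≤ x`, and `v` decides
whether the selected arm pays (probability `pA` or `pB`). -/
noncomputable def banditStep (γ pA pB u v x : ℝ) : ℝ :=
  x + γ * ((1 - x) * (if u ≤ x ∧ v ≤ pA then 1 else 0) - x * (if x < u ∧ v ≤ pB then 1 else 0))

theorem indicator_update_eq_banditStep {Ω : Type*} (U V Y : Ω → ℝ) (γ pA pB : ℝ) (ω : Ω) :
    Y ω + γ * ((1 - Y ω) * ({ω' | U ω' ≤ Y ω' ∧ V ω' ≤ pA}).indicator (1 : Ω → ℝ) ω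
      - Y ω * ({ω' | Y ω' < U ω' ∧ V ω' ≤ pB}).indicator (1 : Ω → ℝ) ω) =
      banditStep γ pA pB (U ω) (V ω) (Y ω) := by
  simp only [indicator_apply, mem_ofPred_eq, Pi.one_apply, banditStep]

section BanditStep

variable {γ pA pB u v x : ℝ}

theorem banditStep_mem_Icc (hγ : γ ∈ Icc (0 : ℝ) 1) (hx : x ∈ Icc (0 : ℝ) 1) :
    banditStep γ pA pB u v x ∈ Icc (0 : ℝ) 1 := by
  obtain ⟨hγ0, hγ1⟩ := hγ
  obtain ⟨hx0, hx1⟩ := hx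
  unfold banditStep
  constructor <;> split_ifs <;> nlinarith [mul_nonneg hγ0 hx0, mul_nonneg hγ0 (sub_nonneg.2 hx1)]

/-- A draw that moves `x` up also moves `x'` up, one that moves `x'` down also moves `x` down,
and both `y ↦ y + γ (1 - y)` and `y ↦ (1 - γ) y` are nondecreasing for `γ ≤ 1`. -/
theorem banditStep_le_banditStep {pA' x' : ℝ} (hγ : γ ∈ Icc (0 : ℝ) 1) (hx : 0 ≤ x)
    (hx' : x' ≤ 1) (hxx' : x ≤ x') (hpA : pA ≤ pA') :
    banditStep γ pA pB u v x ≤ banditStep γ pA' pB u v x' := by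
  obtain ⟨hγ0, hγ1⟩ := hγ
  unfold banditStep
  have hup : u ≤ x ∧ v ≤ pA → u ≤ x' ∧ v ≤ pA' := fun h => ⟨h.1.trans hxx', h.2.trans hpA⟩
  have hdown : x' < u ∧ v ≤ pB → x < u ∧ v ≤ pB := fun h => ⟨hxx'.trans_lt h.1, h.2⟩
  split_ifs <;> first
    | (exfalso; tauto)
    | nlinarith [mul_nonneg hγ0 hx, mul_nonneg hγ0 (sub_nonneg.2 hx'),
        mul_nonneg (sub_nonneg.2 hγ1) (sub_nonneg.2 hxx')]

end BanditStep

theorem mem_Icc_and_le_of_banditStep_recursion {γ u v a b : ℕ → ℝ} {pA pA' pB : ℝ}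
    (hγ : ∀ n, γ (n + 1) ∈ Icc (0 : ℝ) 1) (ha₀ : a 0 ∈ Icc (0 : ℝ) 1)
    (hb₀ : b 0 ∈ Icc (0 : ℝ) 1) (hab₀ : a 0 ≤ b 0) (hpA : pA ≤ pA')
    (ha : ∀ n, a (n + 1) = banditStep (γ (n + 1)) pA pB (u (n + 1)) (v (n + 1)) (a n))
    (hb : ∀ n, b (n + 1) = banditStep (γ (n + 1)) pA' pB (u (n + 1)) (v (n + 1)) (b n))
    (n : ℕ) : a n ∈ Icc (0 : ℝ) 1 ∧ b n ∈ Icc (0 : ℝ) 1 ∧ a n ≤ b n := by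
  induction n with
  | zero => exact ⟨ha₀, hb₀, hab₀⟩
  | succ n ih =>
    obtain ⟨han, hbn, habn⟩ := ih
    rw [ha, hb]
    exact ⟨banditStep_mem_Icc (hγ n) han, banditStep_mem_Icc (hγ n) hbn,
      banditStep_le_banditStep (hγ n) han.1 hbn.2 habn hpA⟩

theorem stmt16_general (Ω : Type*)
    (U V : ℕ → Ω → ℝ) (γ : ℕ → ℝ) (x x' pA pA' pB : ℝ)
    (hx : x ∈ Set.Icc (0:ℝ) 1) (hx' : x' ∈ Set.Icc (0:ℝ) 1) (hxx' : x ≤ x')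
    (hpA : pA ≤ pA')
    (hγ : ∀ n ≥ 1, γ n ∈ Set.Ioo (0:ℝ) 1)
    (X X' : ℕ → Ω → ℝ) (hX0 : ∀ ω, X 0 ω = x) (hX'0 : ∀ ω, X' 0 ω = x')
    (hrec : ∀ n ω, X (n + 1) ω = X n ω + γ (n + 1) *
      ((1 - X n ω) * ({ω' | U (n + 1) ω' ≤ X n ω' ∧ V (n + 1) ω' ≤ pA}).indicator (1 : Ω → ℝ) ω
        - X n ω * ({ω' | X n ω' < U (n + 1) ω' ∧ V (n + 1) ω' ≤ pB}).indicator (1 : Ω → ℝ) ω))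
    (hrec' : ∀ n ω, X' (n + 1) ω = X' n ω + γ (n + 1) *
      ((1 - X' n ω) * ({ω' | U (n + 1) ω' ≤ X' n ω' ∧ V (n + 1) ω' ≤ pA'}).indicator (1 : Ω → ℝ) ω
        - X' n ω * ({ω' | X' n ω' < U (n + 1) ω' ∧ V (n + 1) ω' ≤ pB}).indicator (1 : Ω → ℝ) ω)) :
    ∀ ω n, X n ω ≤ X' n ω := by
  intro ω n
  refine (mem_Icc_and_le_of_banditStep_recursion
    (a := (X · ω)) (b := (X' · ω)) (u := (U · ω)) (v := (V · ω))
    (fun n => Ioo_subset_Icc_self (hγ (n + 1) n.succ_pos))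
    (by simpa only [hX0] using hx) (by simpa only [hX'0] using hx')
    (by simpa only [hX0, hX'0] using hxx') hpA
    (fun n => (hrec n ω).trans (indicator_update_eq_banditStep _ _ _ _ _ _ ω))
    (fun n => (hrec' n ω).trans (indicator_update_eq_banditStep _ _ _ _ _ _ ω)) n).2.2

theorem stmt16 (Ω : Type*) [MeasurableSpace Ω] (μ : Measure Ω) [IsProbabilityMeasure μ]
    (U V : ℕ → Ω → ℝ) (γ : ℕ → ℝ) (x x' pA pA' pB : ℝ)
    (hx : x ∈ Set.Icc (0:ℝ) 1) (hx' : x' ∈ Set.Icc (0:ℝ) 1) (hxx' : x ≤ x')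
    (hpA : pA ≤ pA')
    (hγ : ∀ n ≥ 1, γ n ∈ Set.Ioo (0:ℝ) 1)
    (hU : ∀ n ≥ 1, Measurable (U n)) (hV : ∀ n ≥ 1, Measurable (V n))
    (hUlaw : ∀ n ≥ 1, μ.map (U n) = volume.restrict (Set.Icc (0:ℝ) 1))
    (hVlaw : ∀ n ≥ 1, μ.map (V n) = volume.restrict (Set.Icc (0:ℝ) 1))
    (hUiid : iIndepFun U μ)
    (hViid : iIndepFun V μ)
    (hUV : IndepFun (fun ω (n : ℕ) => U n ω) (fun ω (n : ℕ) => V n ω) μ)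
    (X X' : ℕ → Ω → ℝ) (hX0 : ∀ ω, X 0 ω = x) (hX'0 : ∀ ω, X' 0 ω = x')
    (hrec : ∀ n ω, X (n + 1) ω = X n ω + γ (n + 1) *
      ((1 - X n ω) * ({ω' | U (n + 1) ω' ≤ X n ω' ∧ V (n + 1) ω' ≤ pA}).indicator (1 : Ω → ℝ) ω
        - X n ω * ({ω' | X n ω' < U (n + 1) ω' ∧ V (n + 1) ω' ≤ pB}).indicator (1 : Ω → ℝ) ω))
    (hrec' : ∀ n ω, X' (n + 1) ω = X' n ω + γ (n + 1) *
      ((1 - X' n ω) * ({ω' | U (n + 1) ω' ≤ X' n ω' ∧ V (n + 1) ω' ≤ pA'}).indicator (1 : Ω → ℝ) ω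
        - X' n ω * ({ω' | X' n ω' < U (n + 1) ω' ∧ V (n + 1) ω' ≤ pB}).indicator (1 : Ω → ℝ) ω)) :
    ∀ ω n, X n ω ≤ X' n ω :=
  stmt16_general Ω U V γ x x' pA pA' pB hx hx' hxx' hpA hγ X X' hX0 hX'0 hrec hrec'
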